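/- Let Δ ≥ 2 and let 𝒮 be a collection (with repetition allowed) of copies of the star K_{1,Δ} on a common vertex set V with |V| = n, and let C ⊆ V be the set of vertices that are centers of at least one star of 𝒮. If 𝒮 is rainbow K_{1,Δ}-free, then |𝒮| ≤ n(Δ-1) - |C|·Δ. -/

import Mathlib

/-- A copy of the star K_{1,Δ} on the vertex set `V`: a center together with
a set of `Δ` leaves not containing the center. -/
structure StarGraph (V : Type) (Δ : ℕ) where
  center : V
  leaves : Finset V
  card_leaves : leaves.card = Δ
  center_not_mem : center ∉ leaves

/-- `x` and `y` are adjacent in the star `S`. -/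
def StarGraph.Adj {V : Type} {Δ : ℕ} (S : StarGraph V Δ) (x y : V) : Prop :=
  (x = S.center ∧ y ∈ S.leaves) ∨ (y = S.center ∧ x ∈ S.leaves)

/-- The collection `S` has a rainbow star with center `u` and leaf set `L`:
there is an injective (on `L`) assignment of the leaves to members of the
collection such that each edge from `u` to a leaf lies in the assigned star. -/
def IsRainbowStarAt {V : Type} {Δ t : ℕ} (S : Fin t → StarGraph V Δ) (u : V) (L : Finset V) : Prop :=
  u ∉ L ∧ ∃ g : V → Fin t, Set.InjOn g ↑L ∧ ∀ l ∈ L, (S (g l)).Adj u l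

/-- The collection `S` contains a rainbow `K_{1,Δ}`. -/
def HasRainbowStar {V : Type} {Δ t : ℕ} (S : Fin t → StarGraph V Δ) : Prop :=
  ∃ (u : V) (L : Finset V), L.card = Δ ∧ IsRainbowStarAt S u L


/-- The number of stars of the collection `S` with center `u` (this is `|𝒮_u|`). -/
noncomputable def centerCount {V : Type} {Δ t : ℕ} (S : Fin t → StarGraph V Δ) (u : V) : ℕ :=
  {i : Fin t | (S i).center = u}.ncard

/-- The in-degree `d⁻(u)`: the number of vertices `x ≠ u` such that `u` is a leaf of
some star of the collection with center `x`. -/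
noncomputable def inDeg {V : Type} {Δ t : ℕ} (S : Fin t → StarGraph V Δ) (u : V) : ℕ :=
  {x : V | x ≠ u ∧ ∃ i, (S i).center = x ∧ u ∈ (S i).leaves}.ncard

/-- The set of vertices that are centers of at least one star of the collection. -/
def centers {V : Type} {Δ t : ℕ} (S : Fin t → StarGraph V Δ) : Set V :=
  {u : V | ∃ i, (S i).center = u}


/-!
Orient every edge of every star away from its center. If the stars centered at `u` together
with the in-neighbours of `u` number at least `Δ`, Hall's theorem picks `Δ` of them with distinct
`u`-neighbours: a star centered at `u` offers its `Δ` leaves, one witnessing an arc `x → u` offers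
`x`. That is a rainbow star at `u`, so in a rainbow-free collection
`|𝒮_u| + d⁻(u) ≤ Δ - 1` for every `u`. Summing over `u`, the left side adds up to `|𝒮|` plus the
number of arcs, and every center has out-degree at least `Δ`.
-/

open Finset Function

variable {V : Type} {Δ t : ℕ}

theorem StarGraph.Adj.ne {S : StarGraph V Δ} {x y : V} (h : S.Adj x y) : x ≠ y := by
  rintro rfl
  rcases h with ⟨rfl, h⟩ | ⟨rfl, h⟩ <;> exact S.center_not_mem h

/-- `x → y` is an arc of the digraph obtained by orienting every star edge away from the center. -/
def IsArc (S : Fin t → StarGraph V Δ) (x y : V) : Prop :=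
  ∃ i, (S i).center = x ∧ y ∈ (S i).leaves

theorem IsArc.ne {S : Fin t → StarGraph V Δ} {x y : V} (h : IsArc S x y) : x ≠ y := by
  obtain ⟨i, rfl, hy⟩ := h
  exact StarGraph.Adj.ne (S := S i) (Or.inl ⟨rfl, hy⟩)

section Rainbow

variable {S : Fin t → StarGraph V Δ} {u : V}

theorem hasRainbowStar_of_injective (hΔ : 0 < Δ) {J : Finset (Fin t)} (hJ : #J = Δ)
    (f : J → V) (hf : Injective f) (hadj : ∀ j : J, (S j).Adj u (f j)) : HasRainbowStar S := by
  have : Nonempty J := by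
    obtain ⟨j, hj⟩ := card_pos.1 (hJ ▸ hΔ)
    exact ⟨⟨j, hj⟩⟩
  have hinv (j : J) : invFun f (f j) = j := leftInverse_invFun hf j
  refine ⟨u, univ.map ⟨f, hf⟩, by simp [hJ], ?_, fun v => ((invFun f v : J) : Fin t), ?_, ?_⟩
  · simp only [mem_map, mem_univ, true_and, not_exists]
    exact fun j hj => (hadj j).ne hj.symm
  · simp only [coe_map, coe_univ, Set.image_univ]
    rintro _ ⟨a, rfl⟩ _ ⟨b, rfl⟩ hab
    simp only [Embedding.coeFn_mk, hinv, Subtype.val_inj] at hab ⊢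
    rw [hab]
  · simp only [mem_map, mem_univ, true_and]
    rintro _ ⟨j, rfl⟩
    simpa [hinv] using hadj j

/-- Hall's condition holds: a star centered at `u` alone offers `Δ ≥ #J` neighbours of `u`,
and stars having `u` as a leaf offer their pairwise distinct centers. -/
theorem exists_injective_adj [Fintype V] {J : Finset (Fin t)} (hJ : #J ≤ Δ)
    (hu : ∀ j ∈ J, (S j).center = u ∨ u ∈ (S j).leaves)
    (hinj : Set.InjOn (fun j => (S j).center) {j | j ∈ J ∧ (S j).center ≠ u}) :
    ∃ f : J → V, Injective f ∧ ∀ j : J, (S j).Adj u (f j) := by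
  classical
  rw [← Fintype.all_card_le_filter_rel_iff_exists_injective]
  intro A
  by_cases hA : ∃ a ∈ A, (S a).center = u
  · obtain ⟨a, ha, hau⟩ := hA
    calc #A ≤ #J := by simpa using card_le_univ A
      _ ≤ Δ := hJ
      _ = #(S a).leaves := (S a).card_leaves.symm
      _ ≤ _ := card_le_card fun v hv => mem_filter.2 ⟨mem_univ v, a, ha, Or.inl ⟨hau.symm, hv⟩⟩
  · push Not at hA
    have hleaf (a : J) (ha : a ∈ A) : u ∈ (S a).leaves := (hu a a.2).resolve_left (hA a ha)
    calc #A = #(A.image fun a : J => (S a).center) := by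
          refine (card_image_of_injOn fun a ha b hb hab => Subtype.ext ?_).symm
          exact hinj ⟨a.2, hA a ha⟩ ⟨b.2, hA b hb⟩ hab
      _ ≤ _ := card_le_card <| by
          intro v hv
          obtain ⟨a, ha, rfl⟩ := mem_image.1 hv
          exact mem_filter.2 ⟨mem_univ _, a, ha, Or.inr ⟨rfl, hleaf a ha⟩⟩

end Rainbow

section Counting

variable (S : Fin t → StarGraph V Δ)

open Classical in
theorem centerCount_eq_card (u : V) : centerCount S u = #{i | (S i).center = u} := by
  rw [centerCount, Set.ncard_eq_toFinset_card', Set.toFinset_ofPred]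

variable [Fintype V]

open Classical in
theorem inDeg_eq_card (u : V) : inDeg S u = #{x | IsArc S x u} := by
  rw [inDeg, Set.ncard_eq_toFinset_card', Set.toFinset_ofPred]
  exact congrArg card (filter_congr fun x _ => and_iff_right_of_imp IsArc.ne)

theorem sum_centerCount : ∑ u, centerCount S u = t := by
  classical
  simp only [centerCount_eq_card]
  simpa using (card_eq_sum_card_fiberwise fun i (_ : i ∈ univ) => mem_univ (S i).center).symm

theorem ncard_centers_mul_le_sum_inDeg : (centers S).ncard * Δ ≤ ∑ u, inDeg S u := by
  classical
  have hout (x : V) (hx : x ∈ centers S) : Δ ≤ #(univ.bipartiteAbove (IsArc S) x) := by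
    obtain ⟨i, rfl⟩ := hx
    calc Δ = #(S i).leaves := (S i).card_leaves.symm
      _ ≤ _ := card_le_card fun y hy => (mem_bipartiteAbove _).2 ⟨mem_univ y, i, rfl, hy⟩
  calc (centers S).ncard * Δ = ∑ _x ∈ (centers S).toFinset, Δ := by
        rw [sum_const, smul_eq_mul, Set.ncard_eq_toFinset_card']
    _ ≤ ∑ x ∈ (centers S).toFinset, #(univ.bipartiteAbove (IsArc S) x) :=
        sum_le_sum fun x hx => hout x (Set.mem_toFinset.1 hx)
    _ ≤ ∑ x, #(univ.bipartiteAbove (IsArc S) x) := sum_le_sum_of_subset (subset_univ _)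
    _ = ∑ u, #(univ.bipartiteBelow (IsArc S) u) :=
        sum_card_bipartiteAbove_eq_sum_card_bipartiteBelow _
    _ = ∑ u, inDeg S u := by simp [inDeg_eq_card, bipartiteBelow]

end Counting

theorem centerCount_add_inDeg_lt_of_not_hasRainbowStar [Fintype V] {S : Fin t → StarGraph V Δ}
    (hΔ : 0 < Δ) (hfree : ¬ HasRainbowStar S) (u : V) : centerCount S u + inDeg S u < Δ := by
  classical
  by_contra! hle
  set B : Finset (Fin t) := {i | (S i).center = u}
  obtain ⟨R, hR, hRinj, hRimage⟩ := exists_subset_injOn_image_eq_of_surjOn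
    (f := fun i => (S i).center) {i | u ∈ (S i).leaves} {x | IsArc S x u} fun x hx => by
      obtain ⟨i, hi, hu⟩ := (mem_filter.1 hx).2
      exact ⟨i, hu, hi⟩
  have hRcard : #R = inDeg S u := by
    rw [inDeg_eq_card, ← hRimage, card_image_of_injOn hRinj]
  have hdisj : Disjoint B R := disjoint_left.2 fun i hiB hiR =>
    (S i).center_not_mem ((mem_filter.1 hiB).2 ▸ hR hiR)
  obtain ⟨J, hJ, hJcard⟩ := exists_subset_card_eq (s := B ∪ R) (n := Δ) (by
    rw [card_union_of_disjoint hdisj, hRcard, ← centerCount_eq_card]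
    exact hle)
  have hJ_mem (j : Fin t) (hj : j ∈ J) : (S j).center = u ∨ j ∈ R :=
    (mem_union.1 (hJ hj)).imp_left fun hB : j ∈ B => (mem_filter.1 hB).2
  obtain ⟨f, hf, hadj⟩ := exists_injective_adj (S := S) (u := u) hJcard.le
    (fun j hj => (hJ_mem j hj).imp_right fun hjR => hR hjR)
    (hRinj.mono fun j hj => (hJ_mem j hj.1).resolve_left hj.2)
  exact hfree (hasRainbowStar_of_injective hΔ hJcard f hf hadj)

theorem starGraph_count_le_of_rainbow_free {V : Type} [Fintype V]
    (Δ n t : ℕ) (hΔ : 2 ≤ Δ) (hcard : Fintype.card V = n)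
    (S : Fin t → StarGraph V Δ) (hfree : ¬ HasRainbowStar S) :
    (t : ℤ) ≤ (n : ℤ) * ((Δ : ℤ) - 1) - ((centers S).ncard : ℤ) * (Δ : ℤ) := by
  have hvertex (u : V) : centerCount S u + inDeg S u + 1 ≤ Δ :=
    centerCount_add_inDeg_lt_of_not_hasRainbowStar (by omega) hfree u
  have hsum : t + ∑ u, inDeg S u + n ≤ n * Δ := by
    simpa [sum_add_distrib, sum_centerCount, hcard, mul_comm]
      using sum_le_sum fun u (_ : u ∈ univ) => hvertex u
  have hcenters := ncard_centers_mul_le_sum_inDeg S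
  have : t + (centers S).ncard * Δ + n ≤ n * Δ := by omega
  zify at this
  linarith
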